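/- arXiv:1606.06653 — 3 statements merged into one kernel-verified Lean document; each statement's English description precedes it below -/
import Mathlib

section
/- Let N, T, S be positive integers, let U_G ∈ ℂ^{N×N} and U_T ∈ ℂ^{T×T} be unitary matrices, and for each scale index s ∈ Fin S let Ŵ_s : Fin N × Fin T → ℂ be a spectral multiplier. For a time-vertex signal X ∈ ℂ^{N×T} with joint spectrum X̂ = U_G^H X conj(U_T), define the analysis coefficients C_s = U_G (Ŵ_s ⊙ X̂) U_T^⊤ for each s, where ⊙ denotes the entrywise (Hadamard) product, and let ‖S_W(X)‖² = Σ_{s} ‖C_s‖_F². If A = min_{(ℓ,k)} Σ_s |Ŵ_s(ℓ,k)|² > 0 and B = max_{(ℓ,k)} Σ_s |Ŵ_s(ℓ,k)|² < ∞, then for every X ∈ ℂ^{N×T}: A·‖X‖_F² ≤ ‖S_W(X)‖² ≤ B·‖X‖_F². -/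
open Matrix BigOperators
open scoped Matrix


lemma frob_trace {m n : Type*} [Fintype m] [Fintype n] (M : Matrix m n ℂ) :
    ∑ i, ∑ j, ‖M i j‖ ^ 2 = (Matrix.trace (Mᴴ * M)).re := by
  simp only [Matrix.trace, Matrix.diag, Matrix.mul_apply, Matrix.conjTranspose_apply]
  rw [Complex.re_sum, Finset.sum_comm]
  refine Finset.sum_congr rfl fun i _ => ?_
  rw [Complex.re_sum]
  refine Finset.sum_congr rfl fun j _ => ?_
  rw [show star (M j i) = (starRingEnd ℂ) (M j i) from rfl, mul_comm, Complex.mul_conj]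
  simp [Complex.sq_norm, ← Complex.normSq_eq_norm_sq]

lemma frob_unitary {m n : Type*} [Fintype m] [Fintype n] [DecidableEq m] [DecidableEq n]
    (U : Matrix m m ℂ) (V : Matrix n n ℂ)
    (hU : U ∈ Matrix.unitaryGroup m ℂ) (hV : V ∈ Matrix.unitaryGroup n ℂ)
    (M : Matrix m n ℂ) :
    ∑ i, ∑ j, ‖(U * M * Vᵀ) i j‖ ^ 2 = ∑ i, ∑ j, ‖M i j‖ ^ 2 := by
  rw [frob_trace, frob_trace]
  have hU' : Uᴴ * U = 1 := by
    simpa [Matrix.star_eq_conjTranspose] using Matrix.mem_unitaryGroup_iff'.mp hU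
  have hV' : Vᴴ * V = 1 := by
    simpa [Matrix.star_eq_conjTranspose] using Matrix.mem_unitaryGroup_iff'.mp hV
  congr 1
  have h1 : (U * M * Vᵀ)ᴴ * (U * M * Vᵀ) = Vᵀᴴ * (Mᴴ * (Uᴴ * U) * M) * Vᵀ := by
    simp only [Matrix.conjTranspose_mul]
    noncomm_ring [Matrix.mul_assoc]
  have h2 : Vᵀ * Vᵀᴴ = 1 := by
    ext i j
    have h := congrFun (congrFun hV' j) i
    simp only [Matrix.mul_apply, Matrix.conjTranspose_apply, Matrix.transpose_apply,
      Matrix.one_apply] at h ⊢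
    simp_rw [mul_comm] at h
    rw [h]
    simp [eq_comm]
  rw [h1, hU', Matrix.mul_one, Matrix.trace_mul_cycle, ← Matrix.mul_assoc, h2, Matrix.one_mul]

/-- **Frame bounds for the Dynamic Graph Wavelet analysis operator.**
If `A = min_{(ℓ,k)} ∑_s |Ŵ_s(ℓ,k)|² > 0` and `B = max_{(ℓ,k)} ∑_s |Ŵ_s(ℓ,k)|²`, then
for every time-vertex signal `X`, `A‖X‖_F² ≤ ∑_s ‖C_s‖_F² ≤ B‖X‖_F²`, where
`C_s = U_G (Ŵ_s ⊙ X̂) U_Tᵀ` and `X̂ = U_Gᴴ X conj(U_T)`. -/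
theorem dgw_frame_bounds (N T S : ℕ) (hN : 0 < N) (hT : 0 < T) (hS : 0 < S)
    (UG : Matrix (Fin N) (Fin N) ℂ) (UT : Matrix (Fin T) (Fin T) ℂ)
    (hUG : UG ∈ Matrix.unitaryGroup (Fin N) ℂ)
    (hUT : UT ∈ Matrix.unitaryGroup (Fin T) ℂ)
    (W : Fin S → Fin N × Fin T → ℂ)
    (hne : (Finset.univ : Finset (Fin N × Fin T)).Nonempty)
    (A B : ℝ)
    (hA : A = Finset.inf' Finset.univ hne (fun p : Fin N × Fin T => ∑ s, ‖W s p‖ ^ 2))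
    (hB : B = Finset.sup' Finset.univ hne (fun p : Fin N × Fin T => ∑ s, ‖W s p‖ ^ 2))
    (hApos : 0 < A)
    (X : Matrix (Fin N) (Fin T) ℂ)
    (Xhat : Matrix (Fin N) (Fin T) ℂ)
    (hXhat : Xhat = UGᴴ * X * UT.map (starRingEnd ℂ))
    (C : Fin S → Matrix (Fin N) (Fin T) ℂ)
    (hC : ∀ s, C s = UG * ((Matrix.of fun ℓ k => W s (ℓ, k)) ⊙ Xhat) * UTᵀ) :
    A * (∑ n, ∑ t, ‖X n t‖ ^ 2) ≤ (∑ s, ∑ n, ∑ t, ‖C s n t‖ ^ 2) ∧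
      (∑ s, ∑ n, ∑ t, ‖C s n t‖ ^ 2) ≤ B * (∑ n, ∑ t, ‖X n t‖ ^ 2) := by
  -- Xhat preserves Frobenius norm
  have hmap : UT.map (starRingEnd ℂ) = (UTᴴ)ᵀ := by
    ext i j; simp [Matrix.map_apply, Matrix.conjTranspose_apply, Matrix.transpose_apply]
  have hXhat' : Xhat = UGᴴ * X * (UTᴴ)ᵀ := by rw [hXhat, hmap]
  have hXnorm : ∑ n, ∑ t, ‖Xhat n t‖ ^ 2 = ∑ n, ∑ t, ‖X n t‖ ^ 2 := by
    rw [hXhat']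
    exact frob_unitary UGᴴ UTᴴ (Unitary.star_mem hUG) (Unitary.star_mem hUT) X
  -- each C s norm
  have hCs : ∀ s, ∑ n, ∑ t, ‖C s n t‖ ^ 2
      = ∑ n, ∑ t, ‖W s (n, t)‖ ^ 2 * ‖Xhat n t‖ ^ 2 := by
    intro s
    rw [hC s, frob_unitary UG UT hUG hUT]
    refine Finset.sum_congr rfl fun n _ => Finset.sum_congr rfl fun t _ => ?_
    simp [Matrix.hadamard_apply, norm_mul, mul_pow]
  have key : (∑ s, ∑ n, ∑ t, ‖C s n t‖ ^ 2)
      = ∑ n, ∑ t, (∑ s, ‖W s (n, t)‖ ^ 2) * ‖Xhat n t‖ ^ 2 := by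
    simp_rw [hCs, Finset.sum_mul]
    rw [Finset.sum_comm]
    exact Finset.sum_congr rfl fun n _ => Finset.sum_comm
  have hXhatnn : ∀ n t, (0:ℝ) ≤ ‖Xhat n t‖ ^ 2 := fun n t => sq_nonneg _
  constructor
  · calc A * (∑ n, ∑ t, ‖X n t‖ ^ 2) = ∑ n, ∑ t, A * ‖Xhat n t‖ ^ 2 := by
          rw [← hXnorm, Finset.mul_sum]; exact Finset.sum_congr rfl fun n _ => Finset.mul_sum _ _ _
      _ ≤ ∑ n, ∑ t, (∑ s, ‖W s (n, t)‖ ^ 2) * ‖Xhat n t‖ ^ 2 := by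
          refine Finset.sum_le_sum fun n _ => Finset.sum_le_sum fun t _ => ?_
          refine mul_le_mul_of_nonneg_right ?_ (hXhatnn n t)
          rw [hA]
          exact Finset.inf'_le _ (Finset.mem_univ (n, t))
      _ = _ := key.symm
  · calc (∑ s, ∑ n, ∑ t, ‖C s n t‖ ^ 2)
        = ∑ n, ∑ t, (∑ s, ‖W s (n, t)‖ ^ 2) * ‖Xhat n t‖ ^ 2 := key
      _ ≤ ∑ n, ∑ t, B * ‖Xhat n t‖ ^ 2 := by
          refine Finset.sum_le_sum fun n _ => Finset.sum_le_sum fun t _ => ?_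
          refine mul_le_mul_of_nonneg_right ?_ (hXhatnn n t)
          rw [hB]
          exact Finset.le_sup' (fun p : Fin N × Fin T => ∑ s, ‖W s p‖ ^ 2) (Finset.mem_univ (n, t))
      _ = B * (∑ n, ∑ t, ‖X n t‖ ^ 2) := by
          rw [← hXnorm, Finset.mul_sum]; exact Finset.sum_congr rfl fun n _ => (Finset.mul_sum _ _ _).symm
end

section
/- Let β > 0, θ, ω ∈ ℝ, and set z = e^{-β-iω}. Then |1 − z cos θ| / |1 − 2z cos θ + z²| ≥ (1 − e^{-β}) / 4. -/
/-!
Writing `2 cos θ = e^{iθ} + e^{-iθ}`, the denominator factors as `(1 - z e^{iθ}) (1 - z e^{-iθ})`.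
Each factor, like the numerator `1 - z cos θ`, lies between `1 - |z|` and `1 + |z|` in modulus, so
for `|z| < 1` the quotient is at least `(1 - |z|) / (1 + |z|)² ≥ (1 - |z|) / 4`; for `|z| ≥ 1` the
bound is nonpositive. Here `|z| = e^{-β}`.
-/

open Complex

lemma one_sub_norm_le_norm_one_sub_mul {z w : ℂ} (hw : ‖w‖ ≤ 1) : 1 - ‖z‖ ≤ ‖1 - z * w‖ := by
  have hzw : ‖z * w‖ ≤ ‖z‖ := by
    rw [norm_mul]
    exact mul_le_of_le_one_right (norm_nonneg z) hw
  have := norm_sub_norm_le (1 : ℂ) (z * w)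
  rw [norm_one] at this
  linarith

lemma norm_one_sub_mul_le {z w : ℂ} (hw : ‖w‖ ≤ 1) : ‖1 - z * w‖ ≤ 1 + ‖z‖ := by
  calc ‖1 - z * w‖ ≤ ‖(1 : ℂ)‖ + ‖z * w‖ := norm_sub_le _ _
    _ ≤ 1 + ‖z‖ := by
      rw [norm_one, norm_mul]
      gcongr
      exact mul_le_of_le_one_right (norm_nonneg z) hw

lemma one_sub_two_mul_cos_add_sq (z : ℂ) (θ : ℝ) :
    1 - 2 * z * Real.cos θ + z ^ 2 = (1 - z * exp (θ * I)) * (1 - z * exp (-θ * I)) := by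
  have hprod : exp (θ * I) * exp (-θ * I) = 1 := by
    rw [← exp_add, ← add_mul, add_neg_cancel, zero_mul, exp_zero]
  have hsum : exp (θ * I) + exp (-θ * I) = 2 * Real.cos θ := by
    rw [ofReal_cos, two_cos]
  linear_combination z * hsum - z ^ 2 * hprod

lemma one_sub_norm_div_four_le_norm_div_norm (z : ℂ) (θ : ℝ) :
    (1 - ‖z‖) / 4 ≤ ‖1 - z * Real.cos θ‖ / ‖1 - 2 * z * Real.cos θ + z ^ 2‖ := by
  rcases le_or_gt 1 ‖z‖ with hz | hz
  · calc (1 - ‖z‖) / 4 ≤ 0 := by linarith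
      _ ≤ _ := by positivity
  have hcos : ‖((Real.cos θ : ℝ) : ℂ)‖ ≤ 1 := by
    rw [norm_real, Real.norm_eq_abs]
    exact Real.abs_cos_le_one θ
  have hexp (s : ℝ) : ‖exp (s * I)‖ ≤ 1 := (norm_exp_ofReal_mul_I s).le
  have hexp' : ‖exp (-θ * I)‖ ≤ 1 := by
    simpa only [ofReal_neg] using hexp (-θ)
  have hnum := one_sub_norm_le_norm_one_sub_mul (z := z) hcos
  have hfac₁ := one_sub_norm_le_norm_one_sub_mul (z := z) (hexp θ)
  have hfac₂ := one_sub_norm_le_norm_one_sub_mul (z := z) hexp'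
  have hden_pos : 0 < ‖1 - 2 * z * Real.cos θ + z ^ 2‖ := by
    rw [one_sub_two_mul_cos_add_sq, norm_mul]
    exact mul_pos (by linarith) (by linarith)
  have hden_le : ‖1 - 2 * z * Real.cos θ + z ^ 2‖ ≤ 4 := by
    rw [one_sub_two_mul_cos_add_sq, norm_mul]
    calc _ ≤ (1 + ‖z‖) * (1 + ‖z‖) :=
          mul_le_mul (norm_one_sub_mul_le (hexp θ)) (norm_one_sub_mul_le hexp')
            (norm_nonneg _) (by positivity)
      _ ≤ 4 := by nlinarith [norm_nonneg z]
  exact div_le_div₀ (by linarith) hnum hden_pos hden_le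

theorem damped_wave_kernel_lower_bound_general (β θ ω : ℝ)
    (z : ℂ) (hz : z = Complex.exp (-(β : ℂ) - Complex.I * ω)) :
    (1 - Real.exp (-β)) / 4 ≤
      ‖1 - z * Real.cos θ‖ /
        ‖1 - 2 * z * Real.cos θ + z ^ 2‖ := by
  have hnorm : ‖z‖ = Real.exp (-β) := by
    rw [hz, norm_exp]
    simp
  simpa only [hnorm] using one_sub_norm_div_four_le_norm_div_norm z θ

/-- **Lower frame bound for the damped wave kernel.**
For `β > 0`, `θ, ω ∈ ℝ` and `z = e^{-β-iω}`, one has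
`|1 − z cos θ| / |1 − 2z cos θ + z²| ≥ (1 − e^{-β}) / 4`. -/
theorem damped_wave_kernel_lower_bound (β θ ω : ℝ) (hβ : 0 < β)
    (z : ℂ) (hz : z = Complex.exp (-(β : ℂ) - Complex.I * ω)) :
    (1 - Real.exp (-β)) / 4 ≤
      ‖1 - z * Real.cos θ‖ /
        ‖1 - 2 * z * Real.cos θ + z ^ 2‖ :=
  damped_wave_kernel_lower_bound_general β θ ω z hz
end

section
/- Let β > 0, let S be a finite nonempty set of scales, and for each s ∈ S and each pair (λ, ω) ∈ ℝ² let θ_{s,λ} ∈ ℝ be arbitrary (e.g. θ_{s,λ} = arccos(1 − sλ/2)) and define Ŵ_s(λ, ω) = Σ_{t=0}^∞ e^{-βt} cos(t θ_{s,λ}) e^{-iωt}. Then for every (λ, ω), |S| · ((1 − e^{-β})/4)² ≤ Σ_{s∈S} |Ŵ_s(λ, ω)|² ≤ |S| · (1/(1 − e^{-β}))². In particular the frame bounds A = min Σ_s |Ŵ_s|² and B = max Σ_s |Ŵ_s|² over any finite set of pairs (λ, ω) satisfy 0 < A ≤ B < ∞, so the causal damped wave Dynamic Graph Wavelets form a frame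 for every β > 0. -/
/-!
Writing `cos (tθ) = (e^{itθ} + e^{-itθ}) / 2` splits `Ŵ(λ, ω)` into two geometric series,
`Ŵ = ((1 - z₁)⁻¹ + (1 - z₂)⁻¹) / 2` with `z₁ = e^{-β + i(θ - ω)}`, `z₂ = e^{-β - i(θ + ω)}`,
both of modulus `r = e^{-β} < 1`. For `‖z‖ ≤ r` one has `‖1 - z‖ ≥ 1 - r`, giving
`‖Ŵ‖ ≤ 1 / (1 - r)`, and `Re (1 - z)⁻¹ = Re (1 - z) / ‖1 - z‖² ≥ (1 - r) / 4`, giving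
`‖Ŵ‖ ≥ Re Ŵ ≥ (1 - r) / 4`. Since these bounds do not depend on `θ`, summing their squares
over the scales gives frame bounds proportional to `|S|`.
-/

open Complex

theorem norm_inv_one_sub_le {𝕜 : Type*} [NormedDivisionRing 𝕜] {z : 𝕜} {r : ℝ}
    (hz : ‖z‖ ≤ r) (hr : r < 1) : ‖(1 - z)⁻¹‖ ≤ 1 / (1 - r) := by
  have hsub : 1 - r ≤ ‖1 - z‖ := by
    have := norm_sub_norm_le (1 : 𝕜) z
    rw [norm_one] at this
    linarith
  rw [norm_inv, one_div]
  exact inv_anti₀ (by linarith) hsub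

theorem le_re_inv_one_sub {K : Type*} [RCLike K] {z : K} {r : ℝ}
    (hz : ‖z‖ ≤ r) (hr : r < 1) : (1 - r) / 4 ≤ RCLike.re (1 - z)⁻¹ := by
  have hre : 1 - r ≤ RCLike.re (1 - z) := by
    rw [map_sub, RCLike.one_re]
    linarith [RCLike.re_le_norm z]
  have hnorm : ‖1 - z‖ ≤ 2 := by
    calc ‖1 - z‖ ≤ ‖(1 : K)‖ + ‖z‖ := norm_sub_le _ _
      _ ≤ 2 := by rw [norm_one]; linarith
  have hpos : 0 < ‖1 - z‖ := (sub_pos.2 hr).trans_le (hre.trans (RCLike.re_le_norm _))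
  rw [RCLike.inv_re, RCLike.normSq_eq_def']
  refine div_le_div₀ (by linarith) hre (pow_pos hpos 2) ?_
  nlinarith

theorem le_norm_half_add_inv_one_sub {K : Type*} [RCLike K] {z w : K} {r : ℝ}
    (hz : ‖z‖ ≤ r) (hw : ‖w‖ ≤ r) (hr : r < 1) :
    (1 - r) / 4 ≤ ‖((1 - z)⁻¹ + (1 - w)⁻¹) / 2‖ := by
  calc (1 - r) / 4 ≤ (RCLike.re (1 - z)⁻¹ + RCLike.re (1 - w)⁻¹) / 2 := by
        linarith [le_re_inv_one_sub hz hr, le_re_inv_one_sub hw hr]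
    _ = RCLike.re (((1 - z)⁻¹ + (1 - w)⁻¹) / 2) := by
        rw [← RCLike.ofReal_ofNat (K := K), RCLike.div_re_ofReal, map_add]
    _ ≤ ‖((1 - z)⁻¹ + (1 - w)⁻¹) / 2‖ := RCLike.re_le_norm _

theorem norm_half_add_inv_one_sub_le {K : Type*} [RCLike K] {z w : K} {r : ℝ}
    (hz : ‖z‖ ≤ r) (hw : ‖w‖ ≤ r) (hr : r < 1) :
    ‖((1 - z)⁻¹ + (1 - w)⁻¹) / 2‖ ≤ 1 / (1 - r) := by
  calc ‖((1 - z)⁻¹ + (1 - w)⁻¹) / 2‖ ≤ (‖(1 - z)⁻¹‖ + ‖(1 - w)⁻¹‖) / 2 := by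
        rw [norm_div, RCLike.norm_ofNat]
        gcongr
        exact norm_add_le _ _
    _ ≤ 1 / (1 - r) := by
        linarith [norm_inv_one_sub_le hz hr, norm_inv_one_sub_le hw hr]

noncomputable def dampedPhasor (β φ : ℝ) : ℂ := exp (-β + φ * I)

theorem norm_dampedPhasor (β φ : ℝ) : ‖dampedPhasor β φ‖ = Real.exp (-β) := by
  rw [dampedPhasor, norm_exp]
  simp

theorem damped_cos_mul_exp_eq (β θ ω : ℝ) (t : ℕ) :
    (Real.exp (-β * t) * Real.cos (t * θ) : ℂ) * exp (-(I * ω * t)) =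
      (dampedPhasor β (θ - ω) ^ t + dampedPhasor β (-(θ + ω)) ^ t) / 2 := by
  simp only [dampedPhasor, ← exp_nat_mul]
  push_cast
  rw [cos, show (t : ℂ) * (-β + (θ - ω) * I) = -β * t + t * θ * I + -(I * ω * t) by ring,
    show (t : ℂ) * (-β + -(θ + ω) * I) = -β * t + -(t * θ) * I + -(I * ω * t) by ring]
  simp only [exp_add]
  ring

noncomputable def dampedWaveResponse (β θ ω : ℝ) : ℂ :=
  ∑' t : ℕ, (Real.exp (-β * t) * Real.cos (t * θ) : ℂ) * exp (-(I * ω * t))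

theorem dampedWaveResponse_eq {β : ℝ} (hβ : 0 < β) (θ ω : ℝ) :
    dampedWaveResponse β θ ω =
      ((1 - dampedPhasor β (θ - ω))⁻¹ + (1 - dampedPhasor β (-(θ + ω)))⁻¹) / 2 := by
  have hr : Real.exp (-β) < 1 := Real.exp_lt_one_iff.2 (neg_lt_zero.2 hβ)
  have h₁ := hasSum_geometric_of_norm_lt_one ((norm_dampedPhasor β (θ - ω)).trans_lt hr)
  have h₂ := hasSum_geometric_of_norm_lt_one ((norm_dampedPhasor β (-(θ + ω))).trans_lt hr)
  rw [dampedWaveResponse, tsum_congr (damped_cos_mul_exp_eq β θ ω)]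
  exact ((h₁.add h₂).div_const 2).tsum_eq

theorem le_norm_dampedWaveResponse {β : ℝ} (hβ : 0 < β) (θ ω : ℝ) :
    (1 - Real.exp (-β)) / 4 ≤ ‖dampedWaveResponse β θ ω‖ := by
  rw [dampedWaveResponse_eq hβ]
  exact le_norm_half_add_inv_one_sub (norm_dampedPhasor _ _).le (norm_dampedPhasor _ _).le
    (Real.exp_lt_one_iff.2 (neg_lt_zero.2 hβ))

theorem norm_dampedWaveResponse_le {β : ℝ} (hβ : 0 < β) (θ ω : ℝ) :
    ‖dampedWaveResponse β θ ω‖ ≤ 1 / (1 - Real.exp (-β)) := by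
  rw [dampedWaveResponse_eq hβ]
  exact norm_half_add_inv_one_sub_le (norm_dampedPhasor _ _).le (norm_dampedPhasor _ _).le
    (Real.exp_lt_one_iff.2 (neg_lt_zero.2 hβ))

section FrameBounds

variable {ι : Type*} {β : ℝ} (hβ : 0 < β) (S : Finset ι) (θ : ι → ℝ) (ω : ℝ)
include hβ

theorem card_mul_sq_le_sum_sq_norm_dampedWaveResponse :
    (S.card : ℝ) * ((1 - Real.exp (-β)) / 4) ^ 2 ≤
      ∑ s ∈ S, ‖dampedWaveResponse β (θ s) ω‖ ^ 2 := by
  have hA : 0 ≤ (1 - Real.exp (-β)) / 4 :=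
    div_nonneg (sub_nonneg.2 (Real.exp_le_one_iff.2 (neg_nonpos.2 hβ.le))) zero_le_four
  simpa only [nsmul_eq_mul] using S.card_nsmul_le_sum _ _ fun s _ =>
    pow_le_pow_left₀ hA (le_norm_dampedWaveResponse hβ (θ s) ω) 2

theorem sum_sq_norm_dampedWaveResponse_le_card_mul_sq :
    ∑ s ∈ S, ‖dampedWaveResponse β (θ s) ω‖ ^ 2 ≤
      (S.card : ℝ) * (1 / (1 - Real.exp (-β))) ^ 2 := by
  simpa only [nsmul_eq_mul] using S.sum_le_card_nsmul _ _ fun s _ =>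
    pow_le_pow_left₀ (norm_nonneg _) (norm_dampedWaveResponse_le hβ (θ s) ω) 2

end FrameBounds

/-- **The causal damped wave Dynamic Graph Wavelets form a frame for every damping
`β > 0`.** With `Ŵ_s(λ, ω) = ∑_{t=0}^∞ e^{-βt} cos(t θ_{s,λ}) e^{-iωt}` for arbitrary
phases `θ_{s,λ}` and a finite nonempty scale set `S`,
`|S|((1 − e^{-β})/4)² ≤ ∑_{s∈S} |Ŵ_s(λ,ω)|² ≤ |S|(1/(1 − e^{-β}))²` for all `(λ, ω)`;
in particular the frame bounds `A = min ∑_s |Ŵ_s|²` and `B = max ∑_s |Ŵ_s|²` over any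
finite nonempty set of pairs `(λ, ω)` satisfy `0 < A ≤ B < ∞`. -/
theorem damped_wave_dgw_frame {ι : Type*} (β : ℝ) (hβ : 0 < β)
    (S : Finset ι) (hS : S.Nonempty)
    (θ : ι → ℝ → ℝ)
    (W : ι → ℝ → ℝ → ℂ)
    (hW : ∀ s lam ω, W s lam ω = ∑' t : ℕ,
      (Real.exp (-β * t) * Real.cos (t * θ s lam) : ℂ) * Complex.exp (-(Complex.I * ω * t))) :
    (∀ lam ω : ℝ,
      (S.card : ℝ) * ((1 - Real.exp (-β)) / 4) ^ 2 ≤ ∑ s ∈ S, ‖W s lam ω‖ ^ 2 ∧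
      ∑ s ∈ S, ‖W s lam ω‖ ^ 2 ≤ (S.card : ℝ) * (1 / (1 - Real.exp (-β))) ^ 2) ∧
    (∀ (P : Finset (ℝ × ℝ)) (hP : P.Nonempty),
      0 < P.inf' hP (fun p => ∑ s ∈ S, ‖W s p.1 p.2‖ ^ 2) ∧
      P.inf' hP (fun p => ∑ s ∈ S, ‖W s p.1 p.2‖ ^ 2) ≤
        P.sup' hP (fun p => ∑ s ∈ S, ‖W s p.1 p.2‖ ^ 2)) := by
  obtain rfl : W = fun s lam ω => dampedWaveResponse β (θ s lam) ω := by
    funext s lam ω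
    exact hW s lam ω
  refine ⟨fun lam ω => ⟨card_mul_sq_le_sum_sq_norm_dampedWaveResponse hβ S _ ω,
    sum_sq_norm_dampedWaveResponse_le_card_mul_sq hβ S _ ω⟩, fun P hP => ⟨?_, ?_⟩⟩
  · refine (Finset.lt_inf'_iff hP).2 fun p _ =>
      lt_of_lt_of_le ?_ (card_mul_sq_le_sum_sq_norm_dampedWaveResponse hβ S _ p.2)
    have := sub_pos.2 (Real.exp_lt_one_iff.2 (neg_lt_zero.2 hβ))
    have := hS.card_pos
    positivity
  · obtain ⟨p, hp⟩ := id hP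
    have hsup :=
      Finset.le_sup' (fun p : ℝ × ℝ => ∑ s ∈ S, ‖dampedWaveResponse β (θ s p.1) p.2‖ ^ 2) hp
    exact (Finset.inf'_le _ hp).trans hsup
end
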